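/- arXiv:2508.20956 — 2 statements merged into one kernel-verified Lean document; each statement's English description precedes it below -/
import Mathlib

section
/- There exists a bounded operator C : K → H such that the operator matrix M_C = [[A, C],[0, B]] is invertible if and only if A is left invertible, B is right invertible (surjective), and dim ker(B) = dim coker(A). -/
/-!
For a fixed `C`, `M_C` is bijective iff `A` is injective, `B` is surjective and `y ↦ [C y]` is a
linear bijection `ker B → H ⧸ range A`. If `M_C` is bijective, its inverse is bounded (open
mapping), so `x ↦ fst (M_C⁻¹ (x, 0))` is a continuous left inverse of `A` and `range A` is
closed. Conversely, if `range A` is closed then `H ⧸ range A ≃ (range A)ᗮ`, and two separable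
Hilbert spaces of the same algebraic dimension are isomorphic (in infinite dimension both have a
countably infinite Hilbert basis). For such an isomorphism `J : ker B ≃ (range A)ᗮ` the operator
`C := J ∘ P_{ker B}` works.
-/


open ContinuousLinearMap Cardinal

noncomputable section

universe u

/-- nullity: dimension of the kernel, as a cardinal -/
def alphaDim {E F : Type u} [NormedAddCommGroup E] [NormedSpace ℂ E]
    [NormedAddCommGroup F] [NormedSpace ℂ F] (T : E →L[ℂ] F) : Cardinal :=
  Module.rank ℂ (LinearMap.ker (T : E →ₗ[ℂ] F))

/-- deficiency: dimension of the cokernel, as a cardinal -/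
def betaDim {E F : Type u} [NormedAddCommGroup E] [NormedSpace ℂ E]
    [NormedAddCommGroup F] [NormedSpace ℂ F] (T : E →L[ℂ] F) : Cardinal :=
  Module.rank ℂ (F ⧸ LinearMap.range (T : E →ₗ[ℂ] F))

/-- the upper triangular operator matrix [[A, C],[0, B]] acting on H ⊕ K -/
def MC {H K : Type u} [NormedAddCommGroup H] [NormedSpace ℂ H]
    [NormedAddCommGroup K] [NormedSpace ℂ K]
    (A : H →L[ℂ] H) (B : K →L[ℂ] K) (C : K →L[ℂ] H) : (H × K) →L[ℂ] (H × K) :=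
  (A.comp (fst ℂ H K) + C.comp (snd ℂ H K)).prod (B.comp (snd ℂ H K))

/-- T - λ -/
def shf {E : Type u} [NormedAddCommGroup E] [NormedSpace ℂ E]
    (T : E →L[ℂ] E) (l : ℂ) : E →L[ℂ] E := T - l • ContinuousLinearMap.id ℂ E

/-- Fredholm left invertible spectrum -/
def sigmaFLI {E : Type u} [NormedAddCommGroup E] [NormedSpace ℂ E]
    (T : E →L[ℂ] E) : Set ℂ :=
  {l | ¬ (Function.Injective (shf T l) ∧ betaDim (shf T l) < ℵ₀)}

/-- Fredholm right invertible spectrum -/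
def sigmaFRI {E : Type u} [NormedAddCommGroup E] [NormedSpace ℂ E]
    (T : E →L[ℂ] E) : Set ℂ :=
  {l | ¬ (Function.Surjective (shf T l) ∧ alphaDim (shf T l) < ℵ₀)}

/-- polynomially convex hull: the set together with the bounded components of its complement -/
def polyHull (S : Set ℂ) : Set ℂ :=
  S ∪ {z | z ∉ S ∧ Bornology.IsBounded (connectedComponentIn Sᶜ z)}

variable {H K : Type u}
  [NormedAddCommGroup H] [InnerProductSpace ℂ H] [CompleteSpace H]
  [NormedAddCommGroup K] [InnerProductSpace ℂ K] [CompleteSpace K]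

section Orthonormal

variable {𝕜 E : Type*} [RCLike 𝕜] [NormedAddCommGroup E] [InnerProductSpace 𝕜 E]

theorem Orthonormal.countable [TopologicalSpace.SeparableSpace E] {ι : Type*} {v : ι → E}
    (hv : Orthonormal 𝕜 v) : Countable ι := by
  refine Pairwise.countable_of_isOpen_disjoint (s := fun i => Metric.ball (v i) (1 / 2))
    (fun i j hij => Metric.ball_disjoint_ball ?_) (fun _ => Metric.isOpen_ball)
    (fun _ => Metric.nonempty_ball.mpr (by norm_num))
  have hsq : ‖v i - v j‖ ^ 2 = 2 := by
    rw [@norm_sub_sq 𝕜, hv.2 hij, hv.1 i, hv.1 j]; norm_num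
  rw [dist_eq_norm]
  nlinarith [norm_nonneg (v i - v j)]

end Orthonormal

section SeparableHilbert

universe v w

variable {𝕜 : Type*} {E : Type v} {F : Type w} [RCLike 𝕜]
  [NormedAddCommGroup E] [InnerProductSpace 𝕜 E] [NormedAddCommGroup F] [InnerProductSpace 𝕜 F]

theorem HilbertBasis.finiteDimensional {ι : Type*} [Finite ι] (b : HilbertBasis ι 𝕜 E) :
    FiniteDimensional 𝕜 E :=
  have := Fintype.ofFinite ι
  .of_basis b.toOrthonormalBasis.toBasis

theorem HilbertBasis.infinite {ι : Type*} (b : HilbertBasis ι 𝕜 E)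
    (hE : ¬ FiniteDimensional 𝕜 E) : Infinite ι :=
  not_finite_iff_infinite.mp fun _ => hE b.finiteDimensional

variable [CompleteSpace E] [CompleteSpace F]

def HilbertBasis.reindex {ι ι' : Type*} (b : HilbertBasis ι' 𝕜 E) (e : ι ≃ ι') :
    HilbertBasis ι 𝕜 E :=
  HilbertBasis.mk (b.orthonormal.comp e e.injective) <| by
    rw [Set.range_comp, e.surjective.range_eq, Set.image_univ, b.dense_span]

variable [TopologicalSpace.SeparableSpace E] [TopologicalSpace.SeparableSpace F]

theorem nonempty_linearIsometryEquiv_of_not_finiteDimensional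
    (hE : ¬ FiniteDimensional 𝕜 E) (hF : ¬ FiniteDimensional 𝕜 F) :
    Nonempty (E ≃ₗᵢ[𝕜] F) := by
  obtain ⟨w₁, b₁, -⟩ := exists_hilbertBasis 𝕜 E
  obtain ⟨w₂, b₂, -⟩ := exists_hilbertBasis 𝕜 F
  have := b₁.orthonormal.countable
  have := b₂.orthonormal.countable
  have := b₁.infinite hE
  have := b₂.infinite hF
  obtain ⟨d₁⟩ := nonempty_denumerable w₁
  obtain ⟨d₂⟩ := nonempty_denumerable w₂
  let e : w₁ ≃ w₂ := (Denumerable.eqv w₁).trans (Denumerable.eqv w₂).symm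
  exact ⟨b₁.repr.trans (b₂.reindex e).repr.symm⟩

theorem nonempty_continuousLinearEquiv_of_lift_rank_eq
    (h : Cardinal.lift.{w} (Module.rank 𝕜 E) = Cardinal.lift.{v} (Module.rank 𝕜 F)) :
    Nonempty (E ≃L[𝕜] F) := by
  obtain ⟨L⟩ := Module.nonempty_linearEquiv_iff_lift_rank_eq.mpr h
  by_cases hE : FiniteDimensional 𝕜 E
  · exact ⟨L.toContinuousLinearEquiv⟩
  · have hF : ¬ FiniteDimensional 𝕜 F := fun _ => hE (.equiv L.symm)
    exact (nonempty_linearIsometryEquiv_of_not_finiteDimensional hE hF).map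
      LinearIsometryEquiv.toContinuousLinearEquiv

end SeparableHilbert

section OperatorMatrix

variable {E F : Type u} [NormedAddCommGroup E] [NormedSpace ℂ E]
  [NormedAddCommGroup F] [NormedSpace ℂ F] (A : E →L[ℂ] E) (B : F →L[ℂ] F) (C : F →L[ℂ] E)

@[simp]
theorem MC_apply (x : E) (y : F) : MC A B C (x, y) = (A x + C y, B y) := rfl

def kerToCoker :
    LinearMap.ker (B : F →ₗ[ℂ] F) →ₗ[ℂ] E ⧸ LinearMap.range (A : E →ₗ[ℂ] E) :=
  (LinearMap.range (A : E →ₗ[ℂ] E)).mkQ ∘ₗ (C : F →ₗ[ℂ] E) ∘ₗ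
    (LinearMap.ker (B : F →ₗ[ℂ] F)).subtype

theorem kerToCoker_apply (y : LinearMap.ker (B : F →ₗ[ℂ] F)) :
    kerToCoker A B C y = Submodule.Quotient.mk (C y) := rfl

theorem kerToCoker_eq_zero_iff (y : LinearMap.ker (B : F →ₗ[ℂ] F)) :
    kerToCoker A B C y = 0 ↔ ∃ x, A x = C y :=
  Submodule.Quotient.mk_eq_zero _

theorem bijective_kerToCoker_of_bijective_MC (h : Function.Bijective (MC A B C)) :
    Function.Bijective (kerToCoker A B C) := by
  refine ⟨(injective_iff_map_eq_zero _).mpr fun ⟨y, hy⟩ hCy => ?_, fun q => ?_⟩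
  · obtain ⟨x, hx⟩ := (kerToCoker_eq_zero_iff A B C _).mp hCy
    have : MC A B C (-x, y) = 0 := by simpa [hx] using hy
    simpa using congrArg Prod.snd ((injective_iff_map_eq_zero _).mp h.1 _ this)
  · obtain ⟨w, rfl⟩ := Submodule.mkQ_surjective _ q
    obtain ⟨⟨x, y⟩, hxy⟩ := h.2 (w, 0)
    simp only [MC_apply, Prod.mk.injEq] at hxy
    refine ⟨⟨y, hxy.2⟩, (Submodule.Quotient.eq _).mpr ⟨-x, ?_⟩⟩
    simp [← hxy.1]

theorem bijective_MC_of_bijective_kerToCoker (hA : Function.Injective A)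
    (hB : Function.Surjective B) (hφ : Function.Bijective (kerToCoker A B C)) :
    Function.Bijective (MC A B C) := by
  refine ⟨(injective_iff_map_eq_zero _).mpr fun ⟨x, y⟩ hxy => ?_, fun ⟨u, v⟩ => ?_⟩
  · simp only [MC_apply, Prod.mk_eq_zero] at hxy
    obtain ⟨hAC, hy⟩ := hxy
    have hy0 : (⟨y, hy⟩ : LinearMap.ker (B : F →ₗ[ℂ] F)) = 0 :=
      hφ.1 <| by
        rw [map_zero, kerToCoker_eq_zero_iff]
        exact ⟨-x, by rw [map_neg, neg_eq_iff_eq_neg, eq_neg_of_add_eq_zero_left hAC]⟩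
    obtain rfl : y = 0 := congrArg Subtype.val hy0
    simpa using hA (by simpa using hAC : A x = A 0)
  · obtain ⟨y₀, rfl⟩ := hB v
    obtain ⟨k, hk⟩ := hφ.2 (Submodule.Quotient.mk (u - C y₀))
    obtain ⟨x, hx⟩ := (Submodule.Quotient.eq _).mp hk
    refine ⟨(-x, y₀ + k), ?_⟩
    have hBk : B k = 0 := k.2
    replace hx : A x = C k - (u - C y₀) := hx
    simp only [MC_apply, map_neg, map_add, hx, hBk, add_zero, Prod.mk.injEq, and_true]
    abel

theorem bijective_MC_iff : Function.Bijective (MC A B C) ↔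
    Function.Injective A ∧ Function.Surjective B ∧ Function.Bijective (kerToCoker A B C) := by
  refine ⟨fun h => ⟨fun x x' hx => ?_, fun v => ?_, bijective_kerToCoker_of_bijective_MC A B C h⟩,
    fun ⟨hA, hB, hφ⟩ => bijective_MC_of_bijective_kerToCoker A B C hA hB hφ⟩
  · exact congrArg Prod.fst (h.1 (by simp [hx] : MC A B C (x, 0) = MC A B C (x', 0)))
  · obtain ⟨⟨x, y⟩, hxy⟩ := h.2 (0, v)
    exact ⟨y, congrArg Prod.snd hxy⟩

theorem isClosed_range_of_bijective_MC [CompleteSpace E] [CompleteSpace F]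
    (h : Function.Bijective (MC A B C)) : IsClosed (Set.range A) := by
  let e := ContinuousLinearEquiv.ofBijective (MC A B C)
    (LinearMap.ker_eq_bot.mpr h.1) (LinearMap.range_eq_top.mpr h.2)
  refine Function.LeftInverse.isClosed_range (f := fun z => (e.symm (z, 0)).1)
    (fun x => ?_) (by fun_prop) A.continuous
  have hx : e (x, 0) = (A x, 0) := by simp [e]
  simp [← hx]

end OperatorMatrix

section Hilbert

variable {E F : Type u} [NormedAddCommGroup E] [InnerProductSpace ℂ E]
  [NormedAddCommGroup F] [InnerProductSpace ℂ F] (A : E →L[ℂ] E) (B : F →L[ℂ] F)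

theorem exists_bijective_MC_of_continuousLinearEquiv
    [(LinearMap.range (A : E →ₗ[ℂ] E)).HasOrthogonalProjection]
    [(LinearMap.ker (B : F →ₗ[ℂ] F)).HasOrthogonalProjection]
    (hA : Function.Injective A) (hB : Function.Surjective B)
    (J : LinearMap.ker (B : F →ₗ[ℂ] F) ≃L[ℂ] (LinearMap.range (A : E →ₗ[ℂ] E))ᗮ) :
    ∃ C : F →L[ℂ] E, Function.Bijective (MC A B C) := by
  set R := LinearMap.range (A : E →ₗ[ℂ] E)
  set N := LinearMap.ker (B : F →ₗ[ℂ] F)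
  let C : F →L[ℂ] E := Rᗮ.subtypeL ∘L (J : N →L[ℂ] Rᗮ) ∘L N.orthogonalProjectionOnto
  let e := R.quotientEquivOfIsCompl Rᗮ R.isCompl_orthogonal
  have hφ : kerToCoker A B C = (J.toLinearEquiv.trans e.symm).toLinearMap := by
    ext y
    rw [LinearEquiv.coe_coe, LinearEquiv.trans_apply, eq_comm, LinearEquiv.symm_apply_eq]
    simp [kerToCoker_apply, C, e, N.orthogonalProjectionOnto_mem_subspace_eq_self y]
  refine ⟨C, bijective_MC_of_bijective_kerToCoker A B C hA hB ?_⟩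
  rw [hφ]
  exact LinearEquiv.bijective _

end Hilbert

theorem stmt_13_general
  [TopologicalSpace.SeparableSpace H] [TopologicalSpace.SeparableSpace K]
    (A : H →L[ℂ] H) (B : K →L[ℂ] K) :
    (∃ C : K →L[ℂ] H, Function.Bijective (MC A B C)) ↔
      (Function.Injective A ∧ IsClosed (Set.range A)) ∧ Function.Surjective B ∧
        alphaDim B = betaDim A := by
  refine ⟨fun ⟨C, hC⟩ => ?_, fun ⟨⟨hA, hR⟩, hB, hrank⟩ => ?_⟩
  · obtain ⟨hA, hB, hφ⟩ := (bijective_MC_iff A B C).mp hC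
    exact ⟨⟨hA, isClosed_range_of_bijective_MC A B C hC⟩, hB,
      (LinearEquiv.ofBijective _ hφ).rank_eq⟩
  · set R := LinearMap.range (A : H →ₗ[ℂ] H)
    set N := LinearMap.ker (B : K →ₗ[ℂ] K)
    have : CompleteSpace R := (LinearMap.coe_range (A : H →ₗ[ℂ] H) ▸ hR).completeSpace_coe
    have : CompleteSpace N := (isClosed_ker B).completeSpace_coe
    obtain ⟨J⟩ := nonempty_continuousLinearEquiv_of_lift_rank_eq (E := N) (F := Rᗮ) <| by
      rw [Cardinal.lift_id, Cardinal.lift_id]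
      exact hrank.trans (R.quotientEquivOfIsCompl Rᗮ R.isCompl_orthogonal).rank_eq
    exact exists_bijective_MC_of_continuousLinearEquiv A B hA hB J

theorem stmt_13
  [TopologicalSpace.SeparableSpace H] [TopologicalSpace.SeparableSpace K]
    (hH : ¬ FiniteDimensional ℂ H) (hK : ¬ FiniteDimensional ℂ K)
    (A : H →L[ℂ] H) (B : K →L[ℂ] K) :
    (∃ C : K →L[ℂ] H, Function.Bijective (MC A B C)) ↔
      (Function.Injective A ∧ IsClosed (Set.range A)) ∧ Function.Surjective B ∧
        alphaDim B = betaDim A :=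
  stmt_13_general A B
end
end

section
/- If A belongs to the class S₊ (for every λ, dim ker(A−λ) ≥ dim coker(A−λ) whenever at least one of these is finite), then for every B ∈ B(K) and every C ∈ B(K,H): σ_FLI(A) ∪ σ_FLI(B) = σ_FLI(M_C). -/
open ContinuousLinearMap Cardinal

noncomputable section

universe u

/-!
If `A - λ` is injective, the hypothesis on `A` forces its cokernel to vanish, so `A - λ` is
invertible. Against a surjective diagonal entry `A`, the matrix `M_C` is injective exactly when
`A` and `B` are, and its cokernel is that of `B`; hence `λ ∉ σ_FLI(M_C)` iff `λ ∉ σ_FLI(A)` and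
`λ ∉ σ_FLI(B)`.
-/

open Function

section Dimensions

variable {E F : Type u} [NormedAddCommGroup E] [NormedSpace ℂ E]
  [NormedAddCommGroup F] [NormedSpace ℂ F]

lemma betaDim_eq_zero_iff (T : E →L[ℂ] F) : betaDim T = 0 ↔ Surjective T := by
  rw [betaDim, rank_zero_iff, Submodule.Quotient.subsingleton_iff, LinearMap.range_eq_top,
    ContinuousLinearMap.coe_coe]

lemma alphaDim_eq_zero_of_injective {T : E →L[ℂ] F} (hT : Injective T) : alphaDim T = 0 := by
  rw [alphaDim, rank_zero_iff, LinearMap.ker_eq_bot_of_injective hT]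
  infer_instance

lemma surjective_of_injective_of_betaDim_le {T : E →L[ℂ] F} (h : betaDim T ≤ alphaDim T)
    (hT : Injective T) : Surjective T := by
  rw [alphaDim_eq_zero_of_injective hT, nonpos_iff_eq_zero] at h
  exact (betaDim_eq_zero_iff T).mp h

end Dimensions

section UpperTriangular

variable {H K : Type u} [NormedAddCommGroup H] [NormedSpace ℂ H]
  [NormedAddCommGroup K] [NormedSpace ℂ K] {A : H →L[ℂ] H} {B : K →L[ℂ] K} {C : K →L[ℂ] H}

lemma MC_apply_s19 (v : H × K) : MC A B C v = (A v.1 + C v.2, B v.2) := rfl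

lemma shf_MC (l : ℂ) : shf (MC A B C) l = MC (shf A l) (shf B l) C := by
  refine ContinuousLinearMap.ext fun v => Prod.ext ?_ rfl
  show A v.1 + C v.2 - l • v.1 = A v.1 - l • v.1 + C v.2
  abel

lemma injective_of_injective_MC (h : Injective (MC A B C)) : Injective A := fun x y hxy =>
  congrArg Prod.fst (@h (x, 0) (y, 0) (by simp [MC_apply_s19, hxy]))

lemma injective_MC_iff (hA : Surjective A) : Injective (MC A B C) ↔ Injective A ∧ Injective B := by
  simp only [injective_iff_map_eq_zero, Prod.forall, MC_apply_s19, Prod.mk_eq_zero]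
  constructor
  · intro h
    refine ⟨fun x hx => (h x 0 (by simp [hx])).1, fun y hy => ?_⟩
    obtain ⟨x, hx⟩ := hA (-C y)
    exact (h x y (by simp [hx, hy])).2
  · rintro ⟨hAi, hBi⟩ x y ⟨hxy, hy⟩
    obtain rfl := hBi y hy
    rw [map_zero, add_zero] at hxy
    exact ⟨hAi x hxy, rfl⟩

lemma range_MC_of_surjective (hA : Surjective A) :
    LinearMap.range (MC A B C : (H × K) →ₗ[ℂ] (H × K)) =
      (LinearMap.range (B : K →ₗ[ℂ] K)).comap (LinearMap.snd ℂ H K) := by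
  ext z
  simp only [LinearMap.mem_range, Submodule.mem_comap, LinearMap.snd_apply,
    ContinuousLinearMap.coe_coe]
  constructor
  · rintro ⟨v, rfl⟩
    exact ⟨v.2, rfl⟩
  · rintro ⟨y, hy⟩
    obtain ⟨x, hx⟩ := hA (z.1 - C y)
    exact ⟨(x, y), Prod.ext (by simp [MC_apply_s19, hx]) hy⟩

lemma betaDim_MC_of_surjective (hA : Surjective A) : betaDim (MC A B C) = betaDim B := by
  let φ : (H × K) →ₗ[ℂ] K ⧸ LinearMap.range (B : K →ₗ[ℂ] K) :=
    (Submodule.mkQ _).comp (LinearMap.snd ℂ H K)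
  have hφ : Surjective φ :=
    (Submodule.mkQ_surjective _).comp fun y => ⟨(0, y), rfl⟩
  have hker : LinearMap.range (MC A B C : (H × K) →ₗ[ℂ] (H × K)) = LinearMap.ker φ := by
    rw [range_MC_of_surjective hA, LinearMap.ker_comp, Submodule.ker_mkQ]
  rw [betaDim, betaDim, hker]
  exact (φ.quotKerEquivOfSurjective hφ).rank_eq

lemma injective_and_betaDim_lt_MC_iff (hA : Injective A → Surjective A) :
    (Injective (MC A B C) ∧ betaDim (MC A B C) < ℵ₀) ↔
      (Injective A ∧ betaDim A < ℵ₀) ∧ (Injective B ∧ betaDim B < ℵ₀) := by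
  constructor
  · rintro ⟨hM, hβ⟩
    have hAs := hA (injective_of_injective_MC hM)
    rw [injective_MC_iff hAs] at hM
    rw [betaDim_MC_of_surjective hAs] at hβ
    exact ⟨⟨hM.1, (betaDim_eq_zero_iff A).mpr hAs ▸ aleph0_pos⟩, hM.2, hβ⟩
  · rintro ⟨⟨hAi, -⟩, hBi, hβ⟩
    have hAs := hA hAi
    rw [injective_MC_iff hAs, betaDim_MC_of_surjective hAs]
    exact ⟨⟨hAi, hBi⟩, hβ⟩

end UpperTriangular

variable {H K : Type u}
  [NormedAddCommGroup H] [InnerProductSpace ℂ H] [CompleteSpace H]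
  [NormedAddCommGroup K] [InnerProductSpace ℂ K] [CompleteSpace K]

theorem stmt_19_general
    (A : H →L[ℂ] H) (B : K →L[ℂ] K)
    (hA : ∀ l : ℂ, (alphaDim (shf A l) < ℵ₀ ∨ betaDim (shf A l) < ℵ₀) →
      betaDim (shf A l) ≤ alphaDim (shf A l)) :
    ∀ C : K →L[ℂ] H, sigmaFLI A ∪ sigmaFLI B = sigmaFLI (MC A B C) := by
  intro C
  ext l
  have hAl : Injective (shf A l) → Surjective (shf A l) := fun h =>
    surjective_of_injective_of_betaDim_le
      (hA l (Or.inl (alphaDim_eq_zero_of_injective h ▸ aleph0_pos))) h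
  simp only [sigmaFLI, Set.mem_union, Set.mem_ofPred_eq, ← not_and_or, shf_MC,
    injective_and_betaDim_lt_MC_iff hAl]

theorem stmt_19
  [TopologicalSpace.SeparableSpace H] [TopologicalSpace.SeparableSpace K]
    (hH : ¬ FiniteDimensional ℂ H) (hK : ¬ FiniteDimensional ℂ K)
    (A : H →L[ℂ] H) (B : K →L[ℂ] K)
    (hA : ∀ l : ℂ, (alphaDim (shf A l) < ℵ₀ ∨ betaDim (shf A l) < ℵ₀) →
      betaDim (shf A l) ≤ alphaDim (shf A l)) :
    ∀ C : K →L[ℂ] H, sigmaFLI A ∪ sigmaFLI B = sigmaFLI (MC A B C) :=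
  stmt_19_general A B hA
end
end
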